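/- Let G_t denote the two-dimensional wave kernel, G_t(x) := (2π)^{−1} (t² − |x|²)^{−1/2} · 1_{|x|<t} for t ≥ 0, x ∈ ℝ². Then there exists a constant C > 0 such that for all 0 ≤ s < t ≤ 1, one has ‖G_t − G_s‖_{L¹(ℝ²)} ≤ C · |t − s|^{1/2}. -/

import Mathlib

/-!
The kernel is radial, so in polar coordinates its `L¹` distance becomes
`2π ∫₀^∞ r |g_t(r) - g_s(r)| dr` with `g_t(r) = (2π)⁻¹ (t² - r²)₊^{-1/2}`. Since
`r (b² - r²)^{-1/2}` is the derivative of `-√(b² - r²)`, everything integrates explicitly: on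
`r < s`, where `g_s ≥ g_t`, the contribution is `√(t² - s²) - (t - s)`, and on `s ≤ r < t` it is
`√(t² - s²)`. Hence `‖G_t - G_s‖₁ ≤ 2√(t² - s²) = 2√((t - s)(t + s)) ≤ 2√2 · √(t - s)`.
-/

open MeasureTheory ENNReal

noncomputable section

/-- `ℝ²` with the Euclidean norm. -/
abbrev E2 := EuclideanSpace ℝ (Fin 2)

/-- Two-dimensional wave kernel `G_t(x) = (2π)⁻¹ (t² - |x|²)^{-1/2} · 1_{|x|<t}`. -/
def G2 (t : ℝ) (x : E2) : ℝ :=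
  if ‖x‖ < t then (2 * Real.pi)⁻¹ * (t ^ 2 - ‖x‖ ^ 2) ^ (-(1 : ℝ) / 2) else 0

open Set Metric

namespace MeasureTheory

theorem lintegral_fun_norm_addHaar {E : Type*} [NormedAddCommGroup E] [NormedSpace ℝ E]
    [FiniteDimensional ℝ E] [MeasurableSpace E] [BorelSpace E] [Nontrivial E]
    (μ : Measure E) [μ.IsAddHaarMeasure] {f : ℝ → ℝ≥0∞} (hf : Measurable f) :
    ∫⁻ x, f ‖x‖ ∂μ = Module.finrank ℝ E * μ (ball 0 1) *
      ∫⁻ y in Ioi (0 : ℝ), ENNReal.ofReal (y ^ (Module.finrank ℝ E - 1)) * f y :=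
  calc ∫⁻ x, f ‖x‖ ∂μ = ∫⁻ x : ({0}ᶜ : Set E), f ‖x.1‖ ∂(μ.comap (↑)) := by
        rw [lintegral_subtype_comap (measurableSet_singleton _).compl fun x ↦ f ‖x‖,
          restrict_compl_singleton]
    _ = ∫⁻ x, f x.2 ∂μ.toSphere.prod (.volumeIoiPow (Module.finrank ℝ E - 1)) := by
        simpa using μ.measurePreserving_homeomorphUnitSphereProd.lintegral_comp_emb
          (Homeomorph.measurableEmbedding _) (f ∘ Subtype.val ∘ Prod.snd)
    _ = μ.toSphere univ * ∫⁻ y : Ioi (0 : ℝ), f y ∂.volumeIoiPow (Module.finrank ℝ E - 1) := by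
        rw [lintegral_prod _ (by fun_prop)]
        simp only [lintegral_const, mul_comm]
    _ = _ := by
        rw [μ.toSphere_apply_univ, Measure.volumeIoiPow,
          lintegral_withDensity_eq_lintegral_mul _ (by fun_prop) (by fun_prop)]
        simp only [Pi.mul_apply]
        rw [lintegral_subtype_comap measurableSet_Ioi
            fun y ↦ ENNReal.ofReal (y ^ (Module.finrank ℝ E - 1)) * f y]

end MeasureTheory

theorem EuclideanSpace.lintegral_fun_norm_fin_two {f : ℝ → ℝ≥0∞} (hf : Measurable f) :
    ∫⁻ x : EuclideanSpace ℝ (Fin 2), f ‖x‖ =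
      2 * ENNReal.ofReal Real.pi * ∫⁻ r in Ioi (0 : ℝ), ENNReal.ofReal r * f r := by
  simp [lintegral_fun_norm_addHaar volume hf]

theorem setLIntegral_Ioo_ofReal_deriv_of_nonneg {g g' : ℝ → ℝ} {a b : ℝ} (hab : a ≤ b)
    (hcont : ContinuousOn g (Icc a b)) (hderiv : ∀ x ∈ Ioo a b, HasDerivAt g (g' x) x)
    (hpos : ∀ x ∈ Ioo a b, 0 ≤ g' x) :
    ∫⁻ x in Ioo a b, ENNReal.ofReal (g' x) = ENNReal.ofReal (g b - g a) := by
  have hint := intervalIntegral.integrableOn_deriv_of_nonneg hcont hderiv hpos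
  rw [← ofReal_integral_eq_lintegral_ofReal (hint.mono_set Ioo_subset_Ioc_self)
      ((ae_restrict_iff' measurableSet_Ioo).2 (.of_forall hpos)),
    ← integral_Ioc_eq_integral_Ioo, ← intervalIntegral.integral_of_le hab,
    intervalIntegral.integral_eq_sub_of_hasDerivAt_of_le hab hcont hderiv
      ((intervalIntegrable_iff_integrableOn_Ioc_of_le hab).2 hint)]

theorem hasDerivAt_neg_sqrt_sq_sub_sq {b r : ℝ} (h : r ^ 2 < b ^ 2) :
    HasDerivAt (fun y ↦ -√(b ^ 2 - y ^ 2)) (r * (b ^ 2 - r ^ 2) ^ (-(1 : ℝ) / 2)) r := by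
  have hpos : 0 < b ^ 2 - r ^ 2 := sub_pos.2 h
  refine (((hasDerivAt_pow 2 r).const_sub (b ^ 2)).sqrt hpos.ne').fun_neg.congr_deriv ?_
  rw [neg_div 2 (1 : ℝ), Real.rpow_neg hpos.le, ← Real.sqrt_eq_rpow]
  field_simp
  ring

theorem setLIntegral_Ioo_mul_rpow_sq_sub_sq {b p q : ℝ} (hp : 0 ≤ p) (hpq : p ≤ q) (hqb : q ≤ b) :
    ∫⁻ r in Ioo p q, ENNReal.ofReal (r * (b ^ 2 - r ^ 2) ^ (-(1 : ℝ) / 2)) =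
      ENNReal.ofReal (√(b ^ 2 - p ^ 2) - √(b ^ 2 - q ^ 2)) := by
  rw [setLIntegral_Ioo_ofReal_deriv_of_nonneg hpq (by fun_prop)
    (fun r hr ↦ hasDerivAt_neg_sqrt_sq_sub_sq (by nlinarith [hr.1, hr.2]))
    (fun r hr ↦ mul_nonneg (hp.trans hr.1.le) (Real.rpow_nonneg (by nlinarith [hr.1, hr.2]) _))]
  ring_nf

def waveProfile (t r : ℝ) : ℝ :=
  if r < t then (t ^ 2 - r ^ 2) ^ (-(1 : ℝ) / 2) else 0

section waveProfile

variable {s t r : ℝ}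

theorem waveProfile_of_lt (h : r < t) : waveProfile t r = (t ^ 2 - r ^ 2) ^ (-(1 : ℝ) / 2) :=
  if_pos h

theorem waveProfile_of_le (h : t ≤ r) : waveProfile t r = 0 :=
  if_neg h.not_gt

@[fun_prop]
theorem measurable_waveProfile (t : ℝ) : Measurable (waveProfile t) :=
  Measurable.ite measurableSet_Iio (by fun_prop) measurable_const

theorem G2_eq_mul_waveProfile (t : ℝ) (x : E2) : G2 t x = (2 * Real.pi)⁻¹ * waveProfile t ‖x‖ := by
  unfold G2 waveProfile
  split_ifs <;> simp

theorem setLIntegral_Ioo_abs_waveProfile_sub (hs : 0 ≤ s) (hst : s < t) :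
    ∫⁻ r in Ioo 0 s, ENNReal.ofReal r * ENNReal.ofReal |waveProfile t r - waveProfile s r| =
      ENNReal.ofReal (√(t ^ 2 - s ^ 2) - (t - s)) := by
  have hle : ∀ r ∈ Ioo 0 s,
      (t ^ 2 - r ^ 2) ^ (-(1 : ℝ) / 2) ≤ (s ^ 2 - r ^ 2) ^ (-(1 : ℝ) / 2) := fun r hr ↦
    Real.rpow_le_rpow_of_nonpos (by nlinarith [hr.1, hr.2]) (by nlinarith [hr.1, hr.2])
      (by norm_num)
  have hpt : ∀ r ∈ Ioo 0 s,
      ENNReal.ofReal r * ENNReal.ofReal |waveProfile t r - waveProfile s r| =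
        ENNReal.ofReal (r * (s ^ 2 - r ^ 2) ^ (-(1 : ℝ) / 2)) -
          ENNReal.ofReal (r * (t ^ 2 - r ^ 2) ^ (-(1 : ℝ) / 2)) := by
    rintro r ⟨hr0, hrs⟩
    rw [waveProfile_of_lt (hrs.trans hst), waveProfile_of_lt hrs,
      abs_of_nonpos (sub_nonpos.2 (hle r ⟨hr0, hrs⟩)), ← ENNReal.ofReal_mul hr0.le,
      ← ENNReal.ofReal_sub _ (mul_nonneg hr0.le (Real.rpow_nonneg (by nlinarith) _))]
    ring_nf
  have hinner := setLIntegral_Ioo_mul_rpow_sq_sub_sq le_rfl hs hst.le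
  have hsqrt : √(t ^ 2 - s ^ 2) ≤ t := (Real.sqrt_le_left (by linarith)).2 (by nlinarith)
  rw [setLIntegral_congr_fun measurableSet_Ioo hpt,
    lintegral_sub (by fun_prop) (by rw [hinner]; exact ENNReal.ofReal_ne_top)
      ((ae_restrict_iff' measurableSet_Ioo).2 (.of_forall fun r hr ↦
        ENNReal.ofReal_le_ofReal (mul_le_mul_of_nonneg_left (hle r hr) hr.1.le))),
    hinner, setLIntegral_Ioo_mul_rpow_sq_sub_sq le_rfl hs le_rfl]
  simp only [zero_pow two_ne_zero, sub_zero, sub_self, Real.sqrt_zero, Real.sqrt_sq hs,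
    Real.sqrt_sq (hs.trans hst.le)]
  rw [← ENNReal.ofReal_sub _ (sub_nonneg.2 hsqrt)]
  congr 1
  ring

theorem setLIntegral_Ico_abs_waveProfile_sub (hs : 0 ≤ s) (hst : s < t) :
    ∫⁻ r in Ico s t, ENNReal.ofReal r * ENNReal.ofReal |waveProfile t r - waveProfile s r| =
      ENNReal.ofReal √(t ^ 2 - s ^ 2) := by
  have hpt : ∀ r ∈ Ioo s t,
      ENNReal.ofReal r * ENNReal.ofReal |waveProfile t r - waveProfile s r| =
        ENNReal.ofReal (r * (t ^ 2 - r ^ 2) ^ (-(1 : ℝ) / 2)) := by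
    rintro r ⟨hsr, hrt⟩
    rw [waveProfile_of_lt hrt, waveProfile_of_le hsr.le, sub_zero,
      abs_of_nonneg (Real.rpow_nonneg (by nlinarith) _), ← ENNReal.ofReal_mul (hs.trans hsr.le)]
  rw [← Measure.restrict_congr_set Ioo_ae_eq_Ico, setLIntegral_congr_fun measurableSet_Ioo hpt,
    setLIntegral_Ioo_mul_rpow_sq_sub_sq hs hst.le le_rfl, sub_self, Real.sqrt_zero, sub_zero]

theorem setLIntegral_Ici_abs_waveProfile_sub (hst : s ≤ t) :
    ∫⁻ r in Ici t, ENNReal.ofReal r * ENNReal.ofReal |waveProfile t r - waveProfile s r| = 0 :=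
  (setLIntegral_congr_fun measurableSet_Ici fun r hr ↦ by
    simp [waveProfile_of_le hr, waveProfile_of_le (hst.trans hr)]).trans lintegral_zero

theorem setLIntegral_Ioi_abs_waveProfile_sub_le (hs : 0 ≤ s) (hst : s < t) :
    ∫⁻ r in Ioi 0, ENNReal.ofReal r * ENNReal.ofReal |waveProfile t r - waveProfile s r| ≤
      ENNReal.ofReal (2 * √(t ^ 2 - s ^ 2)) := by
  have hsqrt : t - s ≤ √(t ^ 2 - s ^ 2) := Real.le_sqrt_of_sq_le (by nlinarith)
  have hcover : Ioi 0 ⊆ Ioo 0 s ∪ (Ico s t ∪ Ici t) := fun r (hr : 0 < r) ↦ by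
    rcases lt_or_ge r s with hrs | hsr
    · exact .inl ⟨hr, hrs⟩
    rcases lt_or_ge r t with hrt | htr
    · exact .inr (.inl ⟨hsr, hrt⟩)
    · exact .inr (.inr htr)
  calc _ ≤ _ := lintegral_mono_set hcover
    _ ≤ _ := (lintegral_union_le _ _ _).trans (add_le_add le_rfl (lintegral_union_le _ _ _))
    _ = ENNReal.ofReal (√(t ^ 2 - s ^ 2) - (t - s)) + ENNReal.ofReal √(t ^ 2 - s ^ 2) := by
      rw [setLIntegral_Ioo_abs_waveProfile_sub hs hst, setLIntegral_Ico_abs_waveProfile_sub hs hst,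
        setLIntegral_Ici_abs_waveProfile_sub hst.le, add_zero]
    _ ≤ ENNReal.ofReal (2 * √(t ^ 2 - s ^ 2)) := by
      rw [← ENNReal.ofReal_add (by linarith) (Real.sqrt_nonneg _)]
      exact ENNReal.ofReal_le_ofReal (by linarith)

end waveProfile

theorem lintegral_abs_G2_sub_le {s t : ℝ} (hs : 0 ≤ s) (hst : s < t) :
    ∫⁻ x : E2, ENNReal.ofReal |G2 t x - G2 s x| ≤ ENNReal.ofReal (2 * √(t ^ 2 - s ^ 2)) := by
  have hc : 0 ≤ (2 * Real.pi)⁻¹ := by positivity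
  calc ∫⁻ x : E2, ENNReal.ofReal |G2 t x - G2 s x|
      = ENNReal.ofReal (2 * Real.pi)⁻¹ *
          ∫⁻ x : E2, ENNReal.ofReal |waveProfile t ‖x‖ - waveProfile s ‖x‖| := by
        rw [← lintegral_const_mul' _ _ ENNReal.ofReal_ne_top]
        congr with x
        rw [G2_eq_mul_waveProfile, G2_eq_mul_waveProfile, ← mul_sub, abs_mul, abs_of_nonneg hc,
          ENNReal.ofReal_mul hc]
    _ = ENNReal.ofReal (2 * Real.pi)⁻¹ * (2 * ENNReal.ofReal Real.pi * ∫⁻ r in Ioi 0,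
          ENNReal.ofReal r * ENNReal.ofReal |waveProfile t r - waveProfile s r|) := by
        rw [EuclideanSpace.lintegral_fun_norm_fin_two
          (f := fun r ↦ ENNReal.ofReal |waveProfile t r - waveProfile s r|) (by fun_prop)]
    _ ≤ ENNReal.ofReal (2 * Real.pi)⁻¹ *
          (2 * ENNReal.ofReal Real.pi * ENNReal.ofReal (2 * √(t ^ 2 - s ^ 2))) := by
        gcongr
        exact setLIntegral_Ioi_abs_waveProfile_sub_le hs hst
    _ = ENNReal.ofReal (2 * √(t ^ 2 - s ^ 2)) := by
        rw [← ENNReal.ofReal_ofNat 2, ← ENNReal.ofReal_mul zero_le_two, ← mul_assoc,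
          ← ENNReal.ofReal_mul hc, inv_mul_cancel₀ (by positivity), ENNReal.ofReal_one, one_mul]

/-- `L¹` Hölder-in-time estimate for the 2d wave kernel. -/
theorem stmt10 :
    ∃ C : ℝ, 0 < C ∧
      ∀ s t : ℝ, 0 ≤ s → s < t → t ≤ 1 →
        ∫⁻ x : E2, ENNReal.ofReal |G2 t x - G2 s x| ≤
          ENNReal.ofReal (C * (t - s) ^ ((1 : ℝ) / 2)) := by
  refine ⟨2 * √2, by positivity, fun s t hs hst ht1 ↦
    (lintegral_abs_G2_sub_le hs hst).trans (ENNReal.ofReal_le_ofReal ?_)⟩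
  rw [← Real.sqrt_eq_rpow, mul_assoc, ← Real.sqrt_mul zero_le_two]
  gcongr
  nlinarith
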